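/- Let G be a group with two finite presentations G = ⟨S|R⟩ and G = ⟨S′|R′⟩, i.e. S and S′ are finite symmetric generating sets of G, and R ⊆ F_S and R′ ⊆ F_{S′} are finite sets of relators whose normal closures equal the kernels of the respective evaluation homomorphisms μ : F_S → G and μ′ : F_{S′} → G. If G satisfies the radial isoperimetric inequality of degree p ≥ 1 with respect to ⟨S|R⟩ (with some constant C > 0), then G satisfies the radial isoperimetric inequality of degree p with respect to ⟨S′|R′⟩ (with some constant C′ > 0). -/

import Mathlib

/-!
A loop `w'` over `S'` becomes a loop `w = φ(w')` over `S` by replacing each letter with a fixed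
word over `S` representing it. The two word metrics are bi-Lipschitz and every point of `w` lies
within bounded distance of a point of `w'`, so the radial sum of `w` is at most a constant times
that of `w'`. For the areas, let `ψ : F_S → F_{S'}` substitute fixed words over `S'` and
`θ = ψ ∘ φ`. Then `w' = (w' · θ(w')⁻¹) · ψ(w)` in `F_{S'}`: the first factor is a product of
`|w'|` conjugates of the finitely many null-homotopic words `s' · θ(s')⁻¹`, and `ψ` multiplies
area by at most the largest `R'`-area of `ψ(r)`, `r ∈ R`. Hence
`Area_{R'}(w') ≤ B |w'| + A Area_R(w)`, and `|w'|` is itself at most the radial sum of `w'`.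
-/

open scoped Pointwise

/-- The product in `G` of a word over the subset `S ⊆ G`. -/
def wordProd {G : Type*} [Group G] (S : Set G) (w : List S) : G :=
  (w.map (fun s => (s : G))).prod

/-- The word metric `d_S(a,b)`: the least `n` such that `b⁻¹ * a` is a product of
`n` elements of `S`. -/
noncomputable def wordDist {G : Type*} [Group G] (S : Set G) (a b : G) : ℕ :=
  sInf {n | ∃ w : List S, w.length = n ∧ wordProd S w = b⁻¹ * a}

/-- The evaluation homomorphism `μ : F_S → G` from the free group on `S`. -/
noncomputable def muEval {G : Type*} [Group G] (S : Set G) : FreeGroup S →* G :=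
  FreeGroup.lift (fun s => (s : G))

/-- A word over `S`, regarded as an element of the free group `F_S`. -/
def wordToFree {G : Type*} [Group G] (S : Set G) (w : List S) : FreeGroup S :=
  (w.map FreeGroup.of).prod

/-- The combinatorial area of a word `w` over `S` with respect to the relator set
`R ⊆ F_S`: the least `k` such that `w = ∏_{i=1}^k vᵢ rᵢ vᵢ⁻¹` in `F_S` with each
`rᵢ ∈ R` or `rᵢ⁻¹ ∈ R`. -/
noncomputable def area {G : Type*} [Group G] (S : Set G) (R : Set (FreeGroup S))
    (w : List S) : ℕ :=
  sInf {k | ∃ v r : Fin k → FreeGroup S,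
    (∀ i, r i ∈ R ∨ (r i)⁻¹ ∈ R) ∧
    wordToFree S w = (List.ofFn (fun i => v i * r i * (v i)⁻¹)).prod}

section Words

variable {G : Type*} [Group G] {S S' : Set G}

@[simp] lemma wordProd_nil : wordProd S [] = 1 := rfl

@[simp] lemma wordProd_cons (s : S) (w : List S) : wordProd S (s :: w) = s * wordProd S w := by
  simp [wordProd]

@[simp] lemma wordProd_append (v w : List S) :
    wordProd S (v ++ w) = wordProd S v * wordProd S w := by
  simp [wordProd]

def invWord (hS : S⁻¹ = S) (w : List S) : List S :=
  (w.map fun s => ⟨(s : G)⁻¹, hS.subset (Set.inv_mem_inv.2 s.2)⟩).reverse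

@[simp] lemma length_invWord (hS : S⁻¹ = S) (w : List S) : (invWord hS w).length = w.length := by
  simp [invWord]

lemma wordProd_invWord (hS : S⁻¹ = S) (w : List S) :
    wordProd S (invWord hS w) = (wordProd S w)⁻¹ := by
  induction w with
  | nil => simp [invWord]
  | cons s w ih =>
    simp only [invWord, List.map_cons, List.reverse_cons, wordProd_append] at ih ⊢
    simp [ih]

lemma exists_wordProd_eq (hS : S⁻¹ = S) (hgen : Subgroup.closure S = ⊤) (g : G) :
    ∃ w : List S, wordProd S w = g := by
  have hg : g ∈ Subgroup.closure S := hgen ▸ Subgroup.mem_top g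
  induction hg using Subgroup.closure_induction with
  | mem x hx => exact ⟨[⟨x, hx⟩], by simp⟩
  | one => exact ⟨[], rfl⟩
  | mul x y _ _ ihx ihy =>
    obtain ⟨v, rfl⟩ := ihx
    obtain ⟨w, rfl⟩ := ihy
    exact ⟨v ++ w, wordProd_append v w⟩
  | inv x _ ih =>
    obtain ⟨w, rfl⟩ := ih
    exact ⟨invWord hS w, wordProd_invWord hS w⟩

lemma wordDist_one_le_length {g : G} {w : List S} (h : wordProd S w = g) :
    wordDist S g 1 ≤ w.length :=
  Nat.sInf_le ⟨w, rfl, by simpa using h⟩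

lemma exists_length_eq_wordDist (hS : S⁻¹ = S) (hgen : Subgroup.closure S = ⊤) (g : G) :
    ∃ w : List S, w.length = wordDist S g 1 ∧ wordProd S w = g := by
  obtain ⟨w, hw⟩ := exists_wordProd_eq hS hgen g
  simp only [wordDist, inv_one, one_mul]
  exact Nat.sInf_mem (s := {n | ∃ w : List S, w.length = n ∧ wordProd S w = g}) ⟨_, w, rfl, hw⟩

lemma wordDist_mul_le (hS : S⁻¹ = S) (hgen : Subgroup.closure S = ⊤) (g : G) {h : G}
    {v : List S} (hv : wordProd S v = h) :
    wordDist S (g * h) 1 ≤ wordDist S g 1 + v.length := by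
  obtain ⟨u, hu, rfl⟩ := exists_length_eq_wordDist hS hgen g
  rw [← hu, ← List.length_append]
  exact wordDist_one_le_length (by rw [wordProd_append, hv])

lemma wordDist_mul_wordProd_take_le (hS : S⁻¹ = S) (hgen : Subgroup.closure S = ⊤) (g : G)
    (v : List S) (k : ℕ) :
    wordDist S (g * wordProd S (v.take k)) 1 ≤ wordDist S (g * wordProd S v) 1 + v.length := by
  have hsplit : g * wordProd S (v.take k) = g * wordProd S v * (wordProd S (v.drop k))⁻¹ := by
    rw [eq_mul_inv_iff_mul_eq, mul_assoc, ← wordProd_append, List.take_append_drop]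
  rw [hsplit]
  refine (wordDist_mul_le hS hgen _ (wordProd_invWord hS _)).trans ?_
  simp

lemma wordProd_flatMap {α : S' → List S} (hα : ∀ s, wordProd S (α s) = s) (u : List S') :
    wordProd S (u.flatMap α) = wordProd S' u := by
  induction u with
  | nil => rfl
  | cons s u ih => rw [List.flatMap_cons, wordProd_append, ih, hα, wordProd_cons]

lemma wordDist_le_mul_wordDist (hS' : S'⁻¹ = S') (hgen' : Subgroup.closure S' = ⊤)
    {α : S' → List S} (hα : ∀ s, wordProd S (α s) = s) {M : ℕ} (hM : ∀ s, (α s).length ≤ M)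
    (g : G) : wordDist S g 1 ≤ M * wordDist S' g 1 := by
  obtain ⟨u, hu, rfl⟩ := exists_length_eq_wordDist hS' hgen' g
  rw [← hu, ← wordProd_flatMap hα]
  refine (wordDist_one_le_length rfl).trans ?_
  rw [List.length_flatMap, mul_comm, ← smul_eq_mul, ← List.length_map (f := fun s => (α s).length)]
  refine List.sum_le_card_nsmul _ _ fun n hn => ?_
  obtain ⟨s, -, rfl⟩ := List.mem_map.1 hn
  exact hM s

end Words

section RadialSum

variable {G : Type*} [Group G] {S S' : Set G}

noncomputable def radialSum (S : Set G) (q : ℕ) (g : G) (w : List S) : ℝ :=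
  ∑ i ∈ Finset.range w.length, ((wordDist S (g * wordProd S (w.take (i + 1))) 1 : ℝ) + 1) ^ q

lemma radialSum_one (q : ℕ) (w : List S) :
    radialSum S q 1 w =
      ∑ i ∈ Finset.range w.length, ((wordDist S (wordProd S (w.take (i + 1))) 1 : ℝ) + 1) ^ q := by
  simp [radialSum]

lemma length_le_radialSum (q : ℕ) (g : G) (w : List S) : (w.length : ℝ) ≤ radialSum S q g w := by
  calc (w.length : ℝ) = ∑ _i ∈ Finset.range w.length, (1 : ℝ) := by simp
    _ ≤ radialSum S q g w := Finset.sum_le_sum fun i _ => one_le_pow₀ (by simp)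

lemma radialSum_append (q : ℕ) (g : G) (v w : List S) :
    radialSum S q g (v ++ w) = radialSum S q g v + radialSum S q (g * wordProd S v) w := by
  rw [radialSum, List.length_append, Finset.sum_range_add]
  congr 1
  · refine Finset.sum_congr rfl fun i hi => ?_
    rw [List.take_append_of_le_length (Finset.mem_range.1 hi)]
  · refine Finset.sum_congr rfl fun i _ => ?_
    rw [add_assoc, List.take_length_add_append, wordProd_append, mul_assoc]

lemma radialSum_cons (q : ℕ) (g : G) (s : S) (w : List S) :
    radialSum S q g (s :: w) =
      ((wordDist S (g * s) 1 : ℝ) + 1) ^ q + radialSum S q (g * s) w := by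
  rw [← List.singleton_append, radialSum_append]
  simp [radialSum]

lemma radialSum_le_of_wordDist_le {q : ℕ} {g : G} {v : List S} {D : ℕ}
    (hD : ∀ k, wordDist S (g * wordProd S (v.take k)) 1 ≤ D) :
    radialSum S q g v ≤ v.length * ((D : ℝ) + 1) ^ q := by
  rw [← Finset.card_range v.length, ← nsmul_eq_mul]
  refine Finset.sum_le_card_nsmul _ _ _ fun i _ => ?_
  gcongr
  exact_mod_cast hD (i + 1)

/-- Within the block `α s`, every point is at `S`-distance at most `M` from the endpoint `g s`,
whose `S`-length is at most `M` times its `S'`-length. -/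
lemma radialSum_flatMap_le (hS : S⁻¹ = S) (hgen : Subgroup.closure S = ⊤) (hS' : S'⁻¹ = S')
    (hgen' : Subgroup.closure S' = ⊤) {α : S' → List S} (hα : ∀ s, wordProd S (α s) = s)
    {M : ℕ} (hM : ∀ s, (α s).length ≤ M) (q : ℕ) (u : List S') (g : G) :
    radialSum S q g (u.flatMap α) ≤ M * (M + 1) ^ q * radialSum S' q g u := by
  induction u generalizing g with
  | nil => simp [radialSum]
  | cons s u ih =>
    have hblock :
        radialSum S q g (α s) ≤ M * ((M + 1) * ((wordDist S' (g * s) 1 : ℝ) + 1)) ^ q := by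
      refine (radialSum_le_of_wordDist_le (D := M * wordDist S' (g * s) 1 + M) fun k => ?_).trans ?_
      · refine (wordDist_mul_wordProd_take_le hS hgen g (α s) k).trans ?_
        rw [hα]
        have := wordDist_le_mul_wordDist hS' hgen' hα hM (g * s)
        have := hM s
        omega
      · gcongr
        · exact_mod_cast hM s
        · push_cast
          nlinarith [(wordDist S' (g * s) 1).cast_nonneg (α := ℝ)]
    rw [mul_pow, ← mul_assoc] at hblock
    rw [List.flatMap_cons, radialSum_append, radialSum_cons, hα, mul_add]
    linarith [ih (g * s)]

end RadialSum

lemma Set.exists_le_mem_pow_of_mem_insert_one_pow {M : Type*} [Monoid M] {s : Set M} {a : M}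
    {n : ℕ} (ha : a ∈ insert 1 s ^ n) : ∃ m ≤ n, a ∈ s ^ m := by
  induction n generalizing a with
  | zero => exact ⟨0, le_rfl, ha⟩
  | succ n ih =>
    obtain ⟨b, hb, c, hc, rfl⟩ := Set.mem_mul.1 (pow_succ (insert 1 s) n ▸ ha)
    obtain ⟨m, hmn, hbm⟩ := ih hb
    rcases hc with rfl | hc
    · exact ⟨m, by omega, by rwa [mul_one]⟩
    · exact ⟨m + 1, by omega, pow_succ s m ▸ Set.mul_mem_mul hbm hc⟩

section RelatorConjugates

variable {H H' : Type*} [Group H] [Group H'] {R : Set H}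

/-- Adjoining `1` makes the `n`-th pointwise power the set of products of at most `n` conjugates
of relators and their inverses. -/
def relatorConjugates (R : Set H) : Set H :=
  insert 1 (Group.conjugatesOfSet (R ∪ R⁻¹))

lemma one_mem_relatorConjugates : (1 : H) ∈ relatorConjugates R :=
  Set.mem_insert 1 _

lemma relatorConjugates_pow_mono {m n : ℕ} (h : m ≤ n) :
    relatorConjugates R ^ m ⊆ relatorConjugates R ^ n :=
  Set.pow_subset_pow_right one_mem_relatorConjugates h

lemma mul_mem_relatorConjugates_pow {x y : H} {m n : ℕ} (hx : x ∈ relatorConjugates R ^ m)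
    (hy : y ∈ relatorConjugates R ^ n) : x * y ∈ relatorConjugates R ^ (m + n) :=
  pow_add (relatorConjugates R) m n ▸ Set.mul_mem_mul hx hy

lemma conj_mem_relatorConjugates_pow (c : H) {x : H} {n : ℕ}
    (hx : x ∈ relatorConjugates R ^ n) : c * x * c⁻¹ ∈ relatorConjugates R ^ n := by
  have hconj : MulAut.conj c '' relatorConjugates R ⊆ relatorConjugates R := by
    rintro _ ⟨y, hy | hy, rfl⟩
    · simp [hy, one_mem_relatorConjugates]
    · exact Or.inr (Group.conj_mem_conjugatesOfSet hy)
  have := Set.pow_subset_pow_left (n := n) hconj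
  rw [← Set.image_pow] at this
  exact this ⟨x, hx, rfl⟩

lemma inv_mem_relatorConjugates_pow {x : H} {n : ℕ} (hx : x ∈ relatorConjugates R ^ n) :
    x⁻¹ ∈ relatorConjugates R ^ n := by
  have hinv : (relatorConjugates R)⁻¹ ⊆ relatorConjugates R := by
    rintro y (hy | hy)
    · exact Or.inl (inv_eq_one.1 hy)
    · obtain ⟨a, ha, hconj⟩ := Group.mem_conjugatesOfSet_iff.1 hy
      obtain ⟨c, hc⟩ := isConj_iff.1 hconj
      have hconj' : IsConj a⁻¹ y := isConj_iff.2 ⟨c, by rw [← inv_inv y, ← hc]; group⟩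
      refine Or.inr (Group.mem_conjugatesOfSet_iff.2 ⟨a⁻¹, ?_, hconj'⟩)
      rcases ha with ha | ha
      exacts [Or.inr (Set.inv_mem_inv.2 ha), Or.inl ha]
  rw [← Set.inv_mem_inv, ← inv_pow] at hx
  exact Set.pow_subset_pow_left hinv hx

lemma exists_mem_relatorConjugates_pow {x : H} (hx : x ∈ Subgroup.normalClosure R) :
    ∃ n, x ∈ relatorConjugates R ^ n := by
  induction hx using Subgroup.closure_induction with
  | mem x hx =>
    exact ⟨1, by rw [pow_one]; exact Or.inr (Group.conjugatesOfSet_mono Set.subset_union_left hx)⟩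
  | one => exact ⟨0, rfl⟩
  | mul x y _ _ ihx ihy =>
    obtain ⟨m, hm⟩ := ihx
    obtain ⟨n, hn⟩ := ihy
    exact ⟨m + n, mul_mem_relatorConjugates_pow hm hn⟩
  | inv x _ ih =>
    obtain ⟨n, hn⟩ := ih
    exact ⟨n, inv_mem_relatorConjugates_pow hn⟩

lemma exists_forall_mem_relatorConjugates_pow {ι : Type*} [Finite ι] {f : ι → H}
    (hf : ∀ i, f i ∈ Subgroup.normalClosure R) : ∃ N, ∀ i, f i ∈ relatorConjugates R ^ N := by
  choose n hn using fun i => exists_mem_relatorConjugates_pow (hf i)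
  obtain ⟨N, hN⟩ := Finite.exists_le n
  exact ⟨N, fun i => relatorConjugates_pow_mono (hN i) (hn i)⟩

lemma image_relatorConjugates_pow_subset {R' : Set H'} (f : H →* H') {A : ℕ}
    (hA : ∀ r ∈ R, f r ∈ relatorConjugates R' ^ A) (n : ℕ) :
    f '' (relatorConjugates R ^ n) ⊆ relatorConjugates R' ^ (A * n) := by
  rw [Set.image_pow, pow_mul]
  refine Set.pow_subset_pow_left ?_
  rintro _ ⟨x, hx | hx, rfl⟩
  · rw [hx, map_one]
    exact Set.one_mem_pow one_mem_relatorConjugates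
  · obtain ⟨r, hr, hconj⟩ := Group.mem_conjugatesOfSet_iff.1 hx
    obtain ⟨c, rfl⟩ := isConj_iff.1 hconj
    rw [map_mul, map_mul, map_inv]
    refine conj_mem_relatorConjugates_pow _ ?_
    rcases hr with hr | hr
    · exact hA r hr
    · simpa using inv_mem_relatorConjugates_pow (hA _ hr)

lemma list_prod_mul_inv_map_mem_relatorConjugates_pow (θ : H →* H) {B : ℕ} (l : List H)
    (hl : ∀ x ∈ l, x * (θ x)⁻¹ ∈ relatorConjugates R ^ B) :
    l.prod * (θ l.prod)⁻¹ ∈ relatorConjugates R ^ (B * l.length) := by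
  induction l with
  | nil => simp
  | cons x l ih =>
    have hsplit : (x :: l).prod * (θ (x :: l).prod)⁻¹ =
        x * (l.prod * (θ l.prod)⁻¹) * x⁻¹ * (x * (θ x)⁻¹) := by
      simp only [List.prod_cons, map_mul]
      group
    rw [hsplit, List.length_cons, mul_add_one]
    exact mul_mem_relatorConjugates_pow
      (conj_mem_relatorConjugates_pow x (ih fun y hy => hl y (List.mem_cons_of_mem x hy)))
      (hl x List.mem_cons_self)

end RelatorConjugates

section Area

variable {G : Type*} [Group G] {S S' : Set G}

@[simp] lemma wordToFree_cons (s : S) (w : List S) :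
    wordToFree S (s :: w) = FreeGroup.of s * wordToFree S w := by
  simp [wordToFree]

@[simp] lemma wordToFree_append (v w : List S) :
    wordToFree S (v ++ w) = wordToFree S v * wordToFree S w := by
  simp [wordToFree]

lemma muEval_wordToFree (w : List S) : muEval S (wordToFree S w) = wordProd S w := by
  induction w with
  | nil => simp [wordToFree]
  | cons s w ih =>
    rw [wordToFree_cons, map_mul, ih, wordProd_cons, muEval, FreeGroup.lift_apply_of]

lemma lift_wordToFree (α : S' → List S) (u : List S') :
    FreeGroup.lift (fun s => wordToFree S (α s)) (wordToFree S' u) =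
      wordToFree S (u.flatMap α) := by
  induction u with
  | nil => simp [wordToFree]
  | cons s u ih => simp [ih]

lemma muEval_lift_wordToFree {α : S' → List S} (hα : ∀ s, wordProd S (α s) = s)
    (x : FreeGroup S') :
    muEval S (FreeGroup.lift (fun s => wordToFree S (α s)) x) = muEval S' x := by
  rw [← MonoidHom.comp_apply]
  congr 1
  refine FreeGroup.ext_hom _ _ fun s => ?_
  rw [MonoidHom.comp_apply, FreeGroup.lift_apply_of, muEval_wordToFree, hα, muEval,
    FreeGroup.lift_apply_of]

lemma area_eq_sInf (R : Set (FreeGroup S)) (w : List S) :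
    area S R w = sInf {k | wordToFree S w ∈ Group.conjugatesOfSet (R ∪ R⁻¹) ^ k} := by
  unfold area
  congr 1
  ext k
  simp only [Set.mem_ofPred_eq, Set.mem_pow]
  constructor
  · rintro ⟨v, r, hr, hw⟩
    exact ⟨fun i => ⟨v i * r i * (v i)⁻¹,
      Group.mem_conjugatesOfSet_iff.2 ⟨r i, hr i, isConj_iff.2 ⟨v i, rfl⟩⟩⟩, hw.symm⟩
  · rintro ⟨f, hf⟩
    choose r hr hconj using fun i => Group.mem_conjugatesOfSet_iff.1 (f i).2
    choose v hv using fun i => isConj_iff.1 (hconj i)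
    exact ⟨v, r, hr, by simp only [hv, ← hf]⟩

lemma area_le_of_mem_relatorConjugates_pow {R : Set (FreeGroup S)} {w : List S} {n : ℕ}
    (h : wordToFree S w ∈ relatorConjugates R ^ n) : area S R w ≤ n := by
  obtain ⟨m, hmn, hm⟩ := Set.exists_le_mem_pow_of_mem_insert_one_pow h
  rw [area_eq_sInf]
  exact (Nat.sInf_le hm).trans hmn

lemma mem_relatorConjugates_pow_area {R : Set (FreeGroup S)} {w : List S}
    (h : wordToFree S w ∈ Subgroup.normalClosure R) :
    wordToFree S w ∈ relatorConjugates R ^ area S R w := by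
  obtain ⟨n, hn⟩ := exists_mem_relatorConjugates_pow h
  obtain ⟨m, -, hm⟩ := Set.exists_le_mem_pow_of_mem_insert_one_pow hn
  rw [area_eq_sInf]
  exact Set.pow_subset_pow_left (Set.subset_insert _ _)
    (Nat.sInf_mem (s := {k | wordToFree S w ∈ Group.conjugatesOfSet (R ∪ R⁻¹) ^ k}) ⟨m, hm⟩)

theorem exists_area_le_area_flatMap (hS' : S'⁻¹ = S') (hgen' : Subgroup.closure S' = ⊤)
    (hS'fin : S'.Finite) {R : Set (FreeGroup S)} (hRfin : R.Finite)
    (hRker : Subgroup.normalClosure R = (muEval S).ker) {R' : Set (FreeGroup S')}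
    (hR'ker : Subgroup.normalClosure R' = (muEval S').ker) {α : S' → List S}
    (hα : ∀ s, wordProd S (α s) = s) :
    ∃ A B : ℕ, ∀ w' : List S', wordProd S' w' = 1 →
      area S' R' w' ≤ B * w'.length + A * area S R (w'.flatMap α) := by
  choose β hβ using fun s : S => exists_wordProd_eq hS' hgen' (s : G)
  set φ := FreeGroup.lift fun s => wordToFree S (α s)
  set ψ := FreeGroup.lift fun s => wordToFree S' (β s)
  have : Finite R := hRfin.to_subtype
  have : Finite S' := hS'fin.to_subtype
  obtain ⟨A, hA⟩ := exists_forall_mem_relatorConjugates_pow (R := R') (f := fun r : R => ψ r)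
    fun r => by
      have hr : (r : FreeGroup S) ∈ (muEval S).ker := hRker ▸ Subgroup.subset_normalClosure r.2
      rwa [hR'ker, MonoidHom.mem_ker, muEval_lift_wordToFree hβ]
  obtain ⟨B, hB⟩ := exists_forall_mem_relatorConjugates_pow (R := R')
    (f := fun s : S' => FreeGroup.of s * (ψ (φ (FreeGroup.of s)))⁻¹) fun s => by
      rw [hR'ker, MonoidHom.mem_ker, map_mul, map_inv, muEval_lift_wordToFree hβ,
        muEval_lift_wordToFree hα, mul_inv_cancel]
  refine ⟨A, B, fun w' hw' => area_le_of_mem_relatorConjugates_pow ?_⟩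
  have hφ : φ (wordToFree S' w') = wordToFree S (w'.flatMap α) := lift_wordToFree α w'
  have hw : wordToFree S (w'.flatMap α) ∈ Subgroup.normalClosure R := by
    rw [hRker, MonoidHom.mem_ker, muEval_wordToFree, wordProd_flatMap hα, hw']
  rw [← inv_mul_cancel_right (wordToFree S' w') (ψ (φ (wordToFree S' w')))]
  refine mul_mem_relatorConjugates_pow ?_
    (image_relatorConjugates_pow_subset ψ (fun r hr => hA ⟨r, hr⟩) _
      ⟨_, mem_relatorConjugates_pow_area hw, by rw [hφ]⟩)
  have h := list_prod_mul_inv_map_mem_relatorConjugates_pow (ψ.comp φ) (w'.map FreeGroup.of)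
    fun x hx => by
      obtain ⟨s, -, rfl⟩ := List.mem_map.1 hx
      exact hB s
  rwa [List.length_map] at h

end Area

theorem radial_isoperimetric_independent_of_presentation_general
    {G : Type*} [Group G] (S S' : Set G)
    (hSsymm : S⁻¹ = S) (hSgen : Subgroup.closure S = ⊤)
    (hS'fin : S'.Finite) (hS'symm : S'⁻¹ = S') (hS'gen : Subgroup.closure S' = ⊤)
    (R : Set (FreeGroup S)) (hRfin : R.Finite)
    (hRker : Subgroup.normalClosure R = (muEval S).ker)
    (R' : Set (FreeGroup S'))
    (hR'ker : Subgroup.normalClosure R' = (muEval S').ker)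
    (p : ℕ)
    -- `G` satisfies the radial isoperimetric inequality of degree `p` w.r.t. `⟨S|R⟩`
    (hRIP : ∃ C : ℝ, 0 < C ∧ ∀ w : List S, wordProd S w = 1 →
      (area S R w : ℝ) ≤ C * ∑ i ∈ Finset.range w.length,
        ((wordDist S (wordProd S (w.take (i + 1))) 1 : ℝ) + 1) ^ (p - 1)) :
    -- then it satisfies it w.r.t. `⟨S'|R'⟩`
    ∃ C' : ℝ, 0 < C' ∧ ∀ w : List S', wordProd S' w = 1 →
      (area S' R' w : ℝ) ≤ C' * ∑ i ∈ Finset.range w.length,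
        ((wordDist S' (wordProd S' (w.take (i + 1))) 1 : ℝ) + 1) ^ (p - 1) := by
  simp only [← radialSum_one] at hRIP ⊢
  obtain ⟨C, hC, hRIP⟩ := hRIP
  choose α hα using fun s : S' => exists_wordProd_eq hSsymm hSgen (s : G)
  have : Finite S' := hS'fin.to_subtype
  obtain ⟨M, hM⟩ := Finite.exists_le fun s => (α s).length
  obtain ⟨A, B, harea⟩ :=
    exists_area_le_area_flatMap hS'symm hS'gen hS'fin hRfin hRker hR'ker hα
  set K : ℝ := M * (M + 1) ^ (p - 1)
  refine ⟨B + A * C * K + 1, by positivity, fun w' hw' => ?_⟩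
  have hw : wordProd S (w'.flatMap α) = 1 := by rw [wordProd_flatMap hα, hw']
  have hlen := length_le_radialSum (p - 1) 1 w'
  have hflat := radialSum_flatMap_le hSsymm hSgen hS'symm hS'gen hα hM (p - 1) w' 1
  calc (area S' R' w' : ℝ)
      ≤ B * w'.length + A * area S R (w'.flatMap α) := by exact_mod_cast harea w' hw'
    _ ≤ B * radialSum S' (p - 1) 1 w' + A * (C * (K * radialSum S' (p - 1) 1 w')) := by
        gcongr
        exact (hRIP _ hw).trans (by gcongr)
    _ ≤ (B + A * C * K + 1) * radialSum S' (p - 1) 1 w' := by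
        nlinarith [(w'.length).cast_nonneg (α := ℝ)]

/-- The radial isoperimetric inequality of degree `p` is independent
of the chosen finite presentation. -/
theorem radial_isoperimetric_independent_of_presentation
    {G : Type*} [Group G] (S S' : Set G)
    (hSfin : S.Finite) (hSsymm : S⁻¹ = S) (hSgen : Subgroup.closure S = ⊤)
    (hS'fin : S'.Finite) (hS'symm : S'⁻¹ = S') (hS'gen : Subgroup.closure S' = ⊤)
    (R : Set (FreeGroup S)) (hRfin : R.Finite)
    (hRker : Subgroup.normalClosure R = (muEval S).ker)
    (R' : Set (FreeGroup S')) (hR'fin : R'.Finite)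
    (hR'ker : Subgroup.normalClosure R' = (muEval S').ker)
    (p : ℕ) (hp : 1 ≤ p)
    -- `G` satisfies the radial isoperimetric inequality of degree `p` w.r.t. `⟨S|R⟩`
    (hRIP : ∃ C : ℝ, 0 < C ∧ ∀ w : List S, wordProd S w = 1 →
      (area S R w : ℝ) ≤ C * ∑ i ∈ Finset.range w.length,
        ((wordDist S (wordProd S (w.take (i + 1))) 1 : ℝ) + 1) ^ (p - 1)) :
    -- then it satisfies it w.r.t. `⟨S'|R'⟩`
    ∃ C' : ℝ, 0 < C' ∧ ∀ w : List S', wordProd S' w = 1 →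
      (area S' R' w : ℝ) ≤ C' * ∑ i ∈ Finset.range w.length,
        ((wordDist S' (wordProd S' (w.take (i + 1))) 1 : ℝ) + 1) ^ (p - 1) :=
  radial_isoperimetric_independent_of_presentation_general S S' hSsymm hSgen hS'fin hS'symm hS'gen R
    hRfin hRker R' hR'ker p hRIP
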